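/- Let φ ∈ F, let x: ℝ → ℝ be continuous with x = φ on (-∞,0], and suppose x restricted to [0,∞) is bounded on compact intervals. Define u(t) ∈ C(-∞,0] by [u(t)](θ) = x(t+θ). Then u(t) ∈ F for every t ≥ 0; moreover for t ∈ [0, jτ₁]: ‖u(t)‖_k ≤ max(‖φ‖_k, sup_{[0,jτ₁]}|x|) and p_k(u(t)) ≤ (Σ_{i=1}^{n(k+j)} |b_i|) max(sup_{[0,jτ₁]}|x|, ‖φ‖_m) + p_{k+j}(φ) for any integer m ≥ (k+j)τ₁. -/

import Mathlib

/-!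
Write `u = x(t + ·)` for `t ∈ [0, jτ₁]`. A value `u(θ)` is either a value of `x` on `[0, jτ₁]` or
a value of `φ`, which bounds `‖u‖_k`. For `p_k(u)`, the terms with `τ_i ≥ (k + j)τ₁` only see `φ`
on `[−τ_i, (k + j)τ₁ − τ_i]`, so they are dominated termwise by those of `p_{k+j}(φ)`; this gives
summability and the tail estimate. The finitely many remaining terms, `n(k) ≤ i < n(k + j)`,
have `τ_i < (k + j)τ₁ ≤ m`, so they only see `x` on `[−m, jτ₁]`, where
`|x| ≤ max(sup_{[0,jτ₁]}|x|, ‖φ‖_m)`.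
-/

open Filter Set

/-- sup_{s ∈ [0, kτ₁]} |b_i φ(s − τ_i)|  (τ₁ = τ 0 with ℕ-indexing). -/
noncomputable def pTerm (b τ : ℕ → ℝ) (φ : ℝ → ℝ) (k i : ℕ) : ℝ :=
  ⨆ s : Set.Icc (0:ℝ) ((k : ℝ) * τ 0), |b i * φ ((s : ℝ) - τ i)|

/-- The seminorm p_k(φ) = Σ_{i ≥ n(k)} sup_{s ∈ [0,kτ₁]} |b_i φ(s − τ_i)|. -/
noncomputable def pSemi (b τ : ℕ → ℝ) (n : ℕ → ℕ) (φ : ℝ → ℝ) (k : ℕ) : ℝ :=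
  ∑' i : ℕ, pTerm b τ φ k (n k + i)

/-- The seminorm ‖φ‖_k = sup_{θ ∈ [−k,0]} |φ(θ)|. -/
noncomputable def normSemi (φ : ℝ → ℝ) (k : ℕ) : ℝ :=
  ⨆ θ : Set.Icc (-(k:ℝ)) (0:ℝ), |φ (θ : ℝ)|

/-- n(k) is the smallest natural number such that τ_i ≥ kτ₁ for all i ≥ n(k). -/
def nSpec (τ : ℕ → ℝ) (n : ℕ → ℕ) : Prop :=
  ∀ k : ℕ, (∀ i, n k ≤ i → (k : ℝ) * τ 0 ≤ τ i) ∧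
    ∀ m : ℕ, (∀ i, m ≤ i → (k : ℝ) * τ 0 ≤ τ i) → n k ≤ m

/-- Membership in the Fréchet space F: φ is continuous on (-∞,0] and
p_k(φ) < ∞ (i.e. the defining series is summable) for every k. -/
def memF (b τ : ℕ → ℝ) (n : ℕ → ℕ) (φ : ℝ → ℝ) : Prop :=
  ContinuousOn φ (Set.Iic 0) ∧
    ∀ k : ℕ, Summable fun i => pTerm b τ φ k (n k + i)

lemma bddAbove_range_Icc {g : ℝ → ℝ} {a c : ℝ} (hg : ContinuousOn g (Icc a c)) :
    BddAbove (range fun s : Icc a c => g s) :=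
  image_eq_range g _ ▸ isCompact_Icc.bddAbove_image hg

lemma abs_le_iSup_Icc {g : ℝ → ℝ} {a c y : ℝ} (hg : ContinuousOn g (Icc a c))
    (hy : y ∈ Icc a c) : |g y| ≤ ⨆ s : Icc a c, |g s| :=
  le_ciSup (f := fun s : Icc a c => |g s|) (bddAbove_range_Icc hg.abs) ⟨y, hy⟩

lemma summable_of_nonneg_of_le_tail {f g : ℕ → ℝ} {N : ℕ} (hf : ∀ i, 0 ≤ f i)
    (hfg : ∀ i, N ≤ i → f i ≤ g i) (hg : Summable fun i => g (N + i)) : Summable f := by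
  refine (summable_nat_add_iff N).mp (hg.of_nonneg_of_le (fun i => hf _) fun i => ?_)
  rw [add_comm]
  exact hfg _ (Nat.le_add_right _ _)

lemma tsum_nat_add_le_sum_Ico_add {f g : ℕ → ℝ} {N N' : ℕ} (hN : N ≤ N') (hf : Summable f)
    (hfg : ∀ i, N' ≤ i → f i ≤ g i) (hg : Summable fun i => g (N' + i)) :
    ∑' i, f (N + i) ≤ ∑ i ∈ Finset.Ico N N', f i + ∑' i, g (N' + i) := by
  obtain ⟨d, rfl⟩ := Nat.exists_eq_add_of_le hN
  have hfN : Summable fun i => f (N + i) := hf.comp_injective (add_right_injective N)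
  rw [← hfN.sum_add_tsum_nat_add d, Finset.sum_Ico_eq_sum_range, Nat.add_sub_cancel_left]
  have hshift : ∀ i, N + (i + d) = N + d + i := fun i => by ring
  gcongr 1
  refine Summable.tsum_le_tsum (fun i => ?_) ((summable_nat_add_iff d).mpr hfN) hg
  rw [hshift]
  exact hfg _ (Nat.le_add_right _ _)

namespace nSpec

variable {τ : ℕ → ℝ} {n : ℕ → ℕ}

lemma monotone (hn : nSpec τ n) (hτ0 : 0 ≤ τ 0) : Monotone n := fun k k' hkk' =>
  (hn k).2 _ fun i hi => le_trans (by gcongr) ((hn k').1 i hi)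

lemma apply_lt_of_lt (hn : nSpec τ n) (hτ : Monotone τ) {k i : ℕ} (hi : i < n k) :
    τ i < k * τ 0 := by
  by_contra! hle
  exact (hn k).2 i (fun i' hi' => hle.trans (hτ hi')) |>.not_gt hi

end nSpec

lemma pTerm_nonneg (b τ : ℕ → ℝ) (φ : ℝ → ℝ) (k i : ℕ) : 0 ≤ pTerm b τ φ k i :=
  Real.iSup_nonneg fun _ => abs_nonneg _

section HistorySegment

variable {b τ : ℕ → ℝ} {φ x : ℝ → ℝ} {T t : ℝ}

lemma le_normSemi (hφ : ContinuousOn φ (Iic 0)) {m : ℕ} {θ : ℝ} (hθ : θ ∈ Icc (-(m : ℝ)) 0) :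
    |φ θ| ≤ normSemi φ m :=
  abs_le_iSup_Icc (hφ.mono Icc_subset_Iic_self) hθ

lemma le_pTerm (hφ : ContinuousOn φ (Iic 0)) {k i : ℕ} (hi : k * τ 0 ≤ τ i) {s : ℝ}
    (hs : s ∈ Icc 0 (k * τ 0)) : |b i * φ (s - τ i)| ≤ pTerm b τ φ k i := by
  have hc : ContinuousOn (fun s => b i * φ (s - τ i)) (Icc 0 (k * τ 0)) :=
    continuousOn_const.mul <| hφ.comp (continuous_sub_right _).continuousOn
      fun s hs => show s - τ i ≤ 0 by linarith [hs.2]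
  exact abs_le_iSup_Icc hc hs

lemma max_iSup_normSemi_nonneg (T : ℝ) (m : ℕ) : 0 ≤ max (⨆ s : Icc 0 T, |x s|) (normSemi φ m) :=
  (Real.iSup_nonneg fun _ => abs_nonneg _).trans (le_max_left _ _)

lemma abs_le_max_iSup_normSemi (hx : ContinuousOn x (Icc 0 T)) (hφ : ContinuousOn φ (Iic 0))
    (hxφ : ∀ θ ≤ (0 : ℝ), x θ = φ θ) {m : ℕ} {y : ℝ} (hy : y ∈ Icc (-(m : ℝ)) T) :
    |x y| ≤ max (⨆ s : Icc 0 T, |x s|) (normSemi φ m) := by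
  rcases le_or_gt y 0 with hy0 | hy0
  · rw [hxφ y hy0]
    exact (le_normSemi hφ ⟨hy.1, hy0⟩).trans (le_max_right _ _)
  · exact (abs_le_iSup_Icc hx ⟨hy0.le, hy.2⟩).trans (le_max_left _ _)

lemma normSemi_shift_le (hx : ContinuousOn x (Icc 0 T)) (hφ : ContinuousOn φ (Iic 0))
    (hxφ : ∀ θ ≤ (0 : ℝ), x θ = φ θ) (ht : t ∈ Icc 0 T) (k : ℕ) :
    normSemi (fun θ => x (t + θ)) k ≤ max (normSemi φ k) (⨆ s : Icc 0 T, |x s|) := by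
  rw [max_comm]
  refine Real.iSup_le (fun θ => ?_) (max_iSup_normSemi_nonneg T k)
  exact abs_le_max_iSup_normSemi hx hφ hxφ ⟨by linarith [θ.2.1, ht.1], by linarith [θ.2.2, ht.2]⟩

lemma pTerm_shift_le_mul (hx : ContinuousOn x (Icc 0 T)) (hφ : ContinuousOn φ (Iic 0))
    (hxφ : ∀ θ ≤ (0 : ℝ), x θ = φ θ) (ht : t ∈ Icc 0 T) {k m i : ℕ} (hki : k * τ 0 ≤ τ i)
    (him : τ i ≤ m) :
    pTerm b τ (fun θ => x (t + θ)) k i ≤ |b i| * max (⨆ s : Icc 0 T, |x s|) (normSemi φ m) := by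
  refine Real.iSup_le (fun s => ?_) (mul_nonneg (abs_nonneg _) (max_iSup_normSemi_nonneg T m))
  rw [abs_mul]
  gcongr
  exact abs_le_max_iSup_normSemi hx hφ hxφ ⟨by linarith [s.2.1, ht.1], by linarith [s.2.2, ht.2]⟩

lemma pTerm_shift_le_pTerm (hφ : ContinuousOn φ (Iic 0)) (hxφ : ∀ θ ≤ (0 : ℝ), x θ = φ θ)
    (ht : t ∈ Icc 0 T) {k k' i : ℕ} (hkk' : k * τ 0 + T ≤ k' * τ 0) (hi : k' * τ 0 ≤ τ i) :
    pTerm b τ (fun θ => x (t + θ)) k i ≤ pTerm b τ φ k' i := by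
  refine Real.iSup_le (fun s => ?_) (pTerm_nonneg _ _ _ _ _)
  have hts : t + s ∈ Icc 0 (k' * τ 0) := ⟨by linarith [s.2.1, ht.1], by linarith [s.2.2, ht.2]⟩
  have hval : x (t + (s - τ i)) = φ (t + s - τ i) := by
    rw [hxφ _ (by linarith [hts.2]), add_sub_assoc]
  simpa only [hval] using le_pTerm hφ hi hts

end HistorySegment

theorem history_segment_in_F_general (b τ : ℕ → ℝ) (n : ℕ → ℕ)
    (hτ : StrictMono τ) (hτpos : ∀ i, 0 < τ i)
    (hn : nSpec τ n)
    (φ : ℝ → ℝ) (hφ : memF b τ n φ)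
    (x : ℝ → ℝ) (hxc : Continuous x) (hxφ : ∀ θ ≤ (0:ℝ), x θ = φ θ)
    (j : ℕ) (t : ℝ) (ht : t ∈ Set.Icc (0:ℝ) ((j : ℝ) * τ 0)) :
    memF b τ n (fun θ => x (t + θ)) ∧
    (∀ k : ℕ, normSemi (fun θ => x (t + θ)) k ≤
      max (normSemi φ k) (⨆ s : Set.Icc (0:ℝ) ((j : ℝ) * τ 0), |x s|)) ∧
    (∀ k m : ℕ, ((k : ℝ) + j) * τ 0 ≤ m →
      pSemi b τ n (fun θ => x (t + θ)) k ≤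
        (∑ i ∈ Finset.range (n (k + j) + 1), |b i|) *
          max (⨆ s : Set.Icc (0:ℝ) ((j : ℝ) * τ 0), |x s|) (normSemi φ m) +
        pSemi b τ n φ (k + j)) := by
  have hxT : ContinuousOn x (Icc 0 (j * τ 0)) := hxc.continuousOn
  have htail : ∀ k i, n (k + j) ≤ i →
      pTerm b τ (fun θ => x (t + θ)) k i ≤ pTerm b τ φ (k + j) i := fun k i hi =>
    pTerm_shift_le_pTerm hφ.1 hxφ ht (by push_cast; linarith) ((hn (k + j)).1 i hi)
  have hsum : ∀ k, Summable (pTerm b τ (fun θ => x (t + θ)) k) := fun k =>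
    summable_of_nonneg_of_le_tail (pTerm_nonneg _ _ _ _) (htail k) (hφ.2 (k + j))
  refine ⟨⟨(hxc.comp (continuous_const_add t)).continuousOn,
    fun k => (hsum k).comp_injective (add_right_injective _)⟩,
    normSemi_shift_le hxT hφ.1 hxφ ht, fun k m hm => ?_⟩
  calc pSemi b τ n (fun θ => x (t + θ)) k
      ≤ ∑ i ∈ Finset.Ico (n k) (n (k + j)), pTerm b τ (fun θ => x (t + θ)) k i +
          pSemi b τ n φ (k + j) :=
        tsum_nat_add_le_sum_Ico_add (hn.monotone (hτpos 0).le (Nat.le_add_right k j))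
          (hsum k) (htail k) (hφ.2 (k + j))
    _ ≤ ∑ i ∈ Finset.Ico (n k) (n (k + j)),
          |b i| * max (⨆ s : Icc (0:ℝ) (j * τ 0), |x s|) (normSemi φ m) +
          pSemi b τ n φ (k + j) := by
        gcongr with i hi
        obtain ⟨hki, hikj⟩ := Finset.mem_Ico.1 hi
        refine pTerm_shift_le_mul hxT hφ.1 hxφ ht ((hn k).1 i hki) ?_
        have hτi := hn.apply_lt_of_lt hτ.monotone hikj
        push_cast at hτi
        linarith
    _ ≤ _ := by
        rw [← Finset.sum_mul]
        gcongr
        · exact max_iSup_normSemi_nonneg _ m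
        · exact fun i hi => Finset.mem_range.2 (Nat.lt_succ_of_lt (Finset.mem_Ico.1 hi).2)

/-- For φ ∈ F and x : ℝ → ℝ continuous with x = φ on (-∞,0],
the history segments u(t) = x(t + ·) lie in F for t ≥ 0, with the estimates
‖u(t)‖_k ≤ max(‖φ‖_k, sup_{[0,jτ₁]}|x|) and
p_k(u(t)) ≤ (Σ_{i ≤ n(k+j)} |b_i|) max(sup_{[0,jτ₁]}|x|, ‖φ‖_m) + p_{k+j}(φ)
for t ∈ [0, jτ₁] and any integer m ≥ (k+j)τ₁. -/
theorem history_segment_in_F (b τ : ℕ → ℝ) (n : ℕ → ℕ)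
    (hτ : StrictMono τ) (hτpos : ∀ i, 0 < τ i)
    (hτtop : Tendsto τ atTop atTop) (hn : nSpec τ n)
    (φ : ℝ → ℝ) (hφ : memF b τ n φ)
    (x : ℝ → ℝ) (hxc : Continuous x) (hxφ : ∀ θ ≤ (0:ℝ), x θ = φ θ)
    (j : ℕ) (t : ℝ) (ht : t ∈ Set.Icc (0:ℝ) ((j : ℝ) * τ 0)) :
    memF b τ n (fun θ => x (t + θ)) ∧
    (∀ k : ℕ, normSemi (fun θ => x (t + θ)) k ≤
      max (normSemi φ k) (⨆ s : Set.Icc (0:ℝ) ((j : ℝ) * τ 0), |x s|)) ∧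
    (∀ k m : ℕ, ((k : ℝ) + j) * τ 0 ≤ m →
      pSemi b τ n (fun θ => x (t + θ)) k ≤
        (∑ i ∈ Finset.range (n (k + j) + 1), |b i|) *
          max (⨆ s : Set.Icc (0:ℝ) ((j : ℝ) * τ 0), |x s|) (normSemi φ m) +
        pSemi b τ n φ (k + j)) :=
  history_segment_in_F_general b τ n hτ hτpos hn φ hφ x hxc hxφ j t ht
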